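/- Let Σ and N be Hermitian positive definite complex s×s matrices, Σ̃ = Σ + N, Ñ = (√((I+Σ̃⁻¹)⁻¹) (N⁻¹ − Σ̃⁻¹) √((I+Σ̃⁻¹)⁻¹))⁻¹, and T = √(Σ̃(Σ̃+I)). Then (Ñ + I)⁻¹ Σ̃ = T⁻¹ Σ (N + I)⁻¹ T. -/

import Mathlib

open Matrix
open scoped ComplexOrder Classical

/-- The (Hermitian positive semidefinite) square root of a positive semidefinite
complex matrix; junk value `0` if the matrix is not positive semidefinite.
For a Hermitian positive definite matrix this is its unique Hermitian positive
definite square root. -/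
noncomputable def msqrt {s : ℕ} (A : Matrix (Fin s) (Fin s) ℂ) :
    Matrix (Fin s) (Fin s) ℂ :=
  if h : A.PosSemidef then
    (h.1.eigenvectorUnitary : Matrix (Fin s) (Fin s) ℂ) *
      diagonal (fun i => ((Real.sqrt (h.1.eigenvalues i) : ℝ) : ℂ)) *
      (star h.1.eigenvectorUnitary : Matrix (Fin s) (Fin s) ℂ)
  else 0

/-!
Write `M = S + N`, `Q = √((1 + M⁻¹)⁻¹)` and `T = √(M (M + 1))`. Both square roots are functions
of `M`, so the functional calculus of `M` gives `Q (1 + M⁻¹) Q = 1`, `Q M = M Q` and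
`(M + 1) Q = T`. Since `Ñ⁻¹ = Q (N⁻¹ - M⁻¹) Q`, the first identity gives
`1 + Ñ⁻¹ = Q (1 + N⁻¹) Q`, hence `(Ñ + 1)⁻¹ M = Q⁻¹ (N + 1)⁻¹ S Q`. Substituting
`Q = (M + 1)⁻¹ T`, what is left is the push-through identity
`(M + 1) (N + 1)⁻¹ S = S (N + 1)⁻¹ (M + 1)`, true because `M + 1 = S + (N + 1)`.
-/

open scoped MatrixOrder

namespace Matrix

section Inverse

variable {n R : Type*} [Fintype n] [DecidableEq n] [CommRing R]

lemma inv_inv_add_one {X : Matrix n n R} (hX : IsUnit X.det) : (X⁻¹ + 1)⁻¹ = (1 + X)⁻¹ * X := by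
  rw [show X⁻¹ + 1 = X⁻¹ * (1 + X) by rw [mul_add, mul_one, nonsing_inv_mul _ hX],
    mul_inv_rev, nonsing_inv_nonsing_inv _ hX]

lemma inv_inv_sandwich_add_one {Q B D : Matrix n n R} (hQ : IsUnit Q.det) (hD : IsUnit D.det)
    (hB : Q * B * Q = 1) : ((Q * D * Q)⁻¹ + 1)⁻¹ = Q⁻¹ * (B + D)⁻¹ * D * Q := by
  have hQDQ : IsUnit (Q * D * Q).det := by simpa only [det_mul] using (hQ.mul hD).mul hQ
  have h1 : 1 + Q * D * Q = Q * (B + D) * Q := by rw [mul_add, add_mul, hB]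
  rw [inv_inv_add_one hQDQ, h1, mul_inv_rev, mul_inv_rev]
  simp only [mul_assoc, nonsing_inv_mul_cancel_left _ _ hQ]

lemma inv_mul_eq_inv_add_conj (S : Matrix n n R) {A : Matrix n n R} (hA : IsUnit A.det)
    (hSA : IsUnit (S + A).det) : A⁻¹ * S = (S + A)⁻¹ * S * A⁻¹ * (S + A) := by
  have push : S * A⁻¹ * (S + A) = (S + A) * (A⁻¹ * S) := by
    rw [mul_add, nonsing_inv_mul_cancel_right _ _ hA, add_mul, mul_nonsing_inv_cancel_left _ _ hA,
      mul_assoc]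
  rw [mul_assoc _ S, mul_assoc, push, nonsing_inv_mul_cancel_left _ _ hSA]

lemma inv_sub_inv_add {S N : Matrix n n R} (hN : IsUnit N.det) (hSN : IsUnit (S + N).det) :
    N⁻¹ - (S + N)⁻¹ = N⁻¹ * S * (S + N)⁻¹ := by
  rw [inv_sub_inv (by simp only [isUnit_iff_isUnit_det, hN, hSN]), add_sub_cancel_right]

theorem inv_inv_sandwich_add_one_mul_eq_conj {S N Q : Matrix n n R} (hS : IsUnit S.det)
    (hN : IsUnit N.det) (hN1 : IsUnit (N + 1).det) (hSN : IsUnit (S + N).det)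
    (hSN1 : IsUnit (S + N + 1).det) (hQ : Q * (1 + (S + N)⁻¹) * Q = 1)
    (hQSN : Commute Q (S + N)) :
    ((Q * (N⁻¹ - (S + N)⁻¹) * Q)⁻¹ + 1)⁻¹ * (S + N)
      = ((S + N + 1) * Q)⁻¹ * S * (N + 1)⁻¹ * ((S + N + 1) * Q) := by
  have hQu : IsUnit Q.det := isUnit_det_of_right_inverse (by rwa [← mul_assoc])
  have hD : IsUnit (N⁻¹ - (S + N)⁻¹).det := by
    rw [inv_sub_inv_add hN hSN, det_mul, det_mul]
    exact ((isUnit_nonsing_inv_det _ hN).mul hS).mul (isUnit_nonsing_inv_det _ hSN)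
  have hBD : (1 + (S + N)⁻¹ + (N⁻¹ - (S + N)⁻¹))⁻¹ * (N⁻¹ - (S + N)⁻¹)
      = (N + 1)⁻¹ * S * (S + N)⁻¹ := by
    rw [add_add_sub_cancel, inv_sub_inv_add hN hSN, ← mul_assoc, ← mul_assoc, ← mul_inv_rev,
      mul_add, mul_one, mul_nonsing_inv _ hN, add_comm]
  have hpush : (N + 1)⁻¹ * S = (S + N + 1)⁻¹ * S * (N + 1)⁻¹ * (S + N + 1) := by
    simpa only [add_assoc] using inv_mul_eq_inv_add_conj S hN1 (by rwa [← add_assoc])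
  calc ((Q * (N⁻¹ - (S + N)⁻¹) * Q)⁻¹ + 1)⁻¹ * (S + N)
      = Q⁻¹ * ((1 + (S + N)⁻¹ + (N⁻¹ - (S + N)⁻¹))⁻¹ * (N⁻¹ - (S + N)⁻¹)) * (Q * (S + N)) := by
        rw [inv_inv_sandwich_add_one hQu hD hQ]; simp only [mul_assoc]
    _ = Q⁻¹ * ((N + 1)⁻¹ * S) * ((S + N)⁻¹ * (S + N) * Q) := by
        rw [hBD, hQSN.eq]; simp only [mul_assoc]
    _ = ((S + N + 1) * Q)⁻¹ * S * (N + 1)⁻¹ * ((S + N + 1) * Q) := by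
        rw [nonsing_inv_mul _ hSN, one_mul, hpush, mul_inv_rev]; simp only [mul_assoc]

end Inverse

section FunctionalCalculus

variable {n 𝕜 : Type*} [Fintype n] [DecidableEq n] [RCLike 𝕜] {A : Matrix n n 𝕜}

lemma PosDef.pos_of_mem_spectrum (hA : A.PosDef) {x : ℝ} (hx : x ∈ spectrum ℝ A) : 0 < x :=
  (isStrictlyPositive_iff_posDef.mpr hA).spectrum_pos hx

lemma PosDef.one_add_inv_eq_cfc (hA : A.PosDef) : 1 + A⁻¹ = cfc (fun x : ℝ => 1 + x⁻¹) A := by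
  have hA' : IsSelfAdjoint A := hA.1
  rw [cfc_const_add 1 (fun x : ℝ => x⁻¹) A (A.finite_real_spectrum.continuousOn _),
    nonsing_inv_eq_ringInverse, ← cfc_ringInverse_id (R := ℝ) (a := A) hA.isUnit,
    Algebra.algebraMap_eq_smul_one, one_smul]

lemma PosDef.inv_one_add_inv_eq_cfc (hA : A.PosDef) :
    (1 + A⁻¹)⁻¹ = cfc (fun x : ℝ => (1 + x⁻¹)⁻¹) A := by
  have hA' : IsSelfAdjoint A := hA.1
  have hne : ∀ x ∈ spectrum ℝ A, 1 + x⁻¹ ≠ 0 := fun x hx => by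
    have := hA.pos_of_mem_spectrum hx; positivity
  rw [cfc_inv (fun x : ℝ => 1 + x⁻¹) A hne (A.finite_real_spectrum.continuousOn _),
    ← hA.one_add_inv_eq_cfc, nonsing_inv_eq_ringInverse]

lemma IsHermitian.add_one_eq_cfc (hA : A.IsHermitian) : A + 1 = cfc (fun x : ℝ => x + 1) A := by
  have hA' : IsSelfAdjoint A := hA
  rw [cfc_add_const 1 (fun x : ℝ => x) A (A.finite_real_spectrum.continuousOn _), cfc_id' ℝ A,
    Algebra.algebraMap_eq_smul_one, one_smul]

lemma IsHermitian.mul_add_one_eq_cfc (hA : A.IsHermitian) :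
    A * (A + 1) = cfc (fun x : ℝ => x * (x + 1)) A := by
  have hA' : IsSelfAdjoint A := hA
  rw [cfc_mul (fun x : ℝ => x) (fun x => x + 1) A (A.finite_real_spectrum.continuousOn _)
      (A.finite_real_spectrum.continuousOn _),
    cfc_add_const 1 (fun x : ℝ => x) A (A.finite_real_spectrum.continuousOn _), cfc_id' ℝ A,
    Algebra.algebraMap_eq_smul_one, one_smul]

end FunctionalCalculus

end Matrix

lemma msqrt_eq_cfc_sqrt {s : ℕ} {A : Matrix (Fin s) (Fin s) ℂ} (hA : A.PosSemidef) :
    msqrt A = cfc Real.sqrt A := by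
  rw [msqrt, dif_pos hA, hA.1.cfc_eq, IsHermitian.cfc, Unitary.conjStarAlgAut_apply]
  rfl

lemma msqrt_cfc {s : ℕ} {A : Matrix (Fin s) (Fin s) ℂ} {f : ℝ → ℝ} (hA : IsSelfAdjoint A)
    (hf : ∀ x ∈ spectrum ℝ A, 0 ≤ f x) : msqrt (cfc f A) = cfc (fun x => √(f x)) A := by
  rw [msqrt_eq_cfc_sqrt (nonneg_iff_posSemidef.mp (cfc_nonneg hf)),
    cfc_comp' Real.sqrt f A (by fun_prop) (A.finite_real_spectrum.continuousOn _)]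

section PosDef

variable {s : ℕ} {M : Matrix (Fin s) (Fin s) ℂ}

lemma Matrix.PosDef.msqrt_inv_one_add_inv_eq_cfc (hM : M.PosDef) :
    msqrt ((1 + M⁻¹)⁻¹) = cfc (fun x : ℝ => √((1 + x⁻¹)⁻¹)) M := by
  rw [hM.inv_one_add_inv_eq_cfc, msqrt_cfc hM.1 fun x hx => ?_]
  have := hM.pos_of_mem_spectrum hx
  positivity

lemma Matrix.PosSemidef.msqrt_mul_add_one_eq_cfc (hM : M.PosSemidef) :
    msqrt (M * (M + 1)) = cfc (fun x : ℝ => √(x * (x + 1))) M := by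
  rw [hM.1.mul_add_one_eq_cfc, msqrt_cfc hM.1 fun x hx => ?_]
  have := spectrum_nonneg_of_nonneg (nonneg_iff_posSemidef.mpr hM) hx
  positivity

lemma Matrix.PosDef.msqrt_inv_one_add_inv_conj (hM : M.PosDef) :
    msqrt ((1 + M⁻¹)⁻¹) * (1 + M⁻¹) * msqrt ((1 + M⁻¹)⁻¹) = 1 := by
  have hM' : IsSelfAdjoint M := hM.1
  have hc (f : ℝ → ℝ) := M.finite_real_spectrum.continuousOn f
  rw [hM.msqrt_inv_one_add_inv_eq_cfc, hM.one_add_inv_eq_cfc, ← cfc_mul _ _ M (hc _) (hc _),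
    ← cfc_mul _ _ M (hc _) (hc _), ← cfc_const_one ℝ M]
  refine cfc_congr fun x hx => ?_
  have hy : 0 < 1 + x⁻¹ := by have := hM.pos_of_mem_spectrum hx; positivity
  rw [mul_right_comm, Real.mul_self_sqrt (inv_nonneg.mpr hy.le), inv_mul_cancel₀ hy.ne']

lemma Matrix.PosDef.commute_msqrt_inv_one_add_inv (hM : M.PosDef) :
    Commute (msqrt ((1 + M⁻¹)⁻¹)) M := by
  have hM' : IsSelfAdjoint M := hM.1
  simpa only [hM.msqrt_inv_one_add_inv_eq_cfc, cfc_id' ℝ M] using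
    cfc_commute_cfc _ (fun x : ℝ => x) M

lemma Matrix.PosDef.add_one_mul_msqrt_inv_one_add_inv (hM : M.PosDef) :
    (M + 1) * msqrt ((1 + M⁻¹)⁻¹) = msqrt (M * (M + 1)) := by
  have hM' : IsSelfAdjoint M := hM.1
  have hc (f : ℝ → ℝ) := M.finite_real_spectrum.continuousOn f
  rw [hM.msqrt_inv_one_add_inv_eq_cfc, hM.posSemidef.msqrt_mul_add_one_eq_cfc, hM.1.add_one_eq_cfc,
    ← cfc_mul _ _ M (hc _) (hc _)]
  refine cfc_congr fun x hx => ?_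
  have hx : 0 < x := hM.pos_of_mem_spectrum hx
  have hx1 : x * (x + 1) = (x + 1) ^ 2 * (1 + x⁻¹)⁻¹ := by field_simp
  rw [hx1, Real.sqrt_mul (sq_nonneg _), Real.sqrt_sq (by positivity)]

end PosDef

/-- Let `S` and `N` be Hermitian positive definite complex `s × s` matrices,
`Σ̃ = S + N`, `Ñ = (√((I+Σ̃⁻¹)⁻¹) (N⁻¹ − Σ̃⁻¹) √((I+Σ̃⁻¹)⁻¹))⁻¹`, and
`T = √(Σ̃(Σ̃+I))`.  Then `(Ñ + I)⁻¹ Σ̃ = T⁻¹ S (N + I)⁻¹ T`. -/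
theorem stmt2 {s : ℕ} (S N : Matrix (Fin s) (Fin s) ℂ)
    (hS : S.PosDef) (hN : N.PosDef) :
    ((msqrt ((1 + (S + N)⁻¹)⁻¹) * (N⁻¹ - (S + N)⁻¹) * msqrt ((1 + (S + N)⁻¹)⁻¹))⁻¹ + 1)⁻¹
        * (S + N)
      = (msqrt ((S + N) * (S + N + 1)))⁻¹ * S * (N + 1)⁻¹
          * msqrt ((S + N) * (S + N + 1)) := by
  have hSN : (S + N).PosDef := hS.add hN
  have isUnit_det {A : Matrix (Fin s) (Fin s) ℂ} (hA : A.PosDef) : IsUnit A.det :=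
    hA.det_pos.ne'.isUnit
  rw [← hSN.add_one_mul_msqrt_inv_one_add_inv]
  exact inv_inv_sandwich_add_one_mul_eq_conj (isUnit_det hS) (isUnit_det hN)
    (isUnit_det (hN.add_posSemidef .one)) (isUnit_det hSN) (isUnit_det (hSN.add_posSemidef .one))
    hSN.msqrt_inv_one_add_inv_conj hSN.commute_msqrt_inv_one_add_inv
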